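/- Let q be a prime, p a positive integer, and F = GF(q^p). Let k, u, w be nonnegative integers and let z_1, …, z_w ∈ F be points whose GF(q)-linear span has dimension ν, with ν ≤ u. Let M be any random variable taking values in F^k, let R be uniformly distributed on F^u, with M and R stochastically independent, and define E = (E_1,…,E_w) by E_i = ∑_{j=1}^{k} M_j z_i^{q^{j-1}} + ∑_{j=1}^{u} R_j z_i^{q^{k+j-1}}. Then H(E) = ν·p·log q. -/

import Mathlib

open scoped Classical

/-- Probability that the random variable `X` (on finite sample space `Ω` with
probability mass function `p`) takes the value `s`. -/
noncomputable def probOf {Ω S : Type*} [Fintype Ω] (p : Ω → ℝ) (X : Ω → S) (s : S) : ℝ :=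
  ∑ ω ∈ Finset.univ.filter (fun ω => X ω = s), p ω

/-- Shannon entropy (natural logarithm) of the random variable `X`. Since
`Real.log 0 = 0`, the convention `0 · log 0 = 0` is automatic. -/
noncomputable def shannonEntropy {Ω S : Type*} [Fintype Ω] [Fintype S]
    (p : Ω → ℝ) (X : Ω → S) : ℝ :=
  -∑ s : S, probOf p X s * Real.log (probOf p X s)

/-- Conditional entropy `H(X | Y) = H(X, Y) - H(Y)`. -/
noncomputable def condEntropyRV {Ω S T : Type*} [Fintype Ω] [Fintype S] [Fintype T]
    (p : Ω → ℝ) (X : Ω → S) (Y : Ω → T) : ℝ :=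
  shannonEntropy p (fun ω => (X ω, Y ω)) - shannonEntropy p Y

/-- Mutual information `I(X; Y) = H(X) + H(Y) - H(X, Y)`. -/
noncomputable def mutualInfoRV {Ω S T : Type*} [Fintype Ω] [Fintype S] [Fintype T]
    (p : Ω → ℝ) (X : Ω → S) (Y : Ω → T) : ℝ :=
  shannonEntropy p X + shannonEntropy p Y - shannonEntropy p (fun ω => (X ω, Y ω))

/-- `X` and `Y` are stochastically independent random variables. -/
def IndepRV {Ω S T : Type*} [Fintype Ω] (p : Ω → ℝ) (X : Ω → S) (Y : Ω → T) : Prop :=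
  ∀ s t, probOf p (fun ω => (X ω, Y ω)) (s, t) = probOf p X s * probOf p Y t

/-!
The vectors `g m = (z i ^ q ^ m)ᵢ` are the images of the Frobenius powers `σ^m`, restricted to
`V = span_{GF(q)} {zᵢ}`, under the injective `F`-linear map `f ↦ (f zᵢ)ᵢ` out of
`V →ₗ[GF(q)] F`, a space of `F`-dimension `ν`. Any `ν` consecutive restrictions
`σ^n, …, σ^(n+ν-1)` are `F`-linearly independent: a relation among them is a `q`-polynomial of
degree `< q^ν` vanishing on the `q^ν` points of `σ^n(V)`. Hence the `u ≥ ν` padding vectors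
`g k, …, g (k+u-1)` already span the `ν`-dimensional space `W` containing every `g m`, so
`E = c(M) + L(R)` with `L` linear onto `W` and `c(M) ∈ W`. A uniform `R` independent of `M`
makes `E` uniform on `W`, whose entropy is `log |W| = ν p log q`.
-/

open Module

open Polynomial in
theorem eq_zero_of_forall_sum_mul_pow_pow_eq_zero {R : Type*} [CommRing R] [IsDomain R]
    {r n : ℕ} (hr : 1 < r) (c : Fin n → R) {S : Set R} (hS : r ^ n ≤ Nat.card S)
    (h : ∀ y ∈ S, ∑ m, c m * y ^ r ^ (m : ℕ) = 0) : c = 0 := by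
  by_contra hc
  obtain ⟨m₀, hm₀⟩ := Function.ne_iff.mp hc
  set P : R[X] := ∑ m, C (c m) * X ^ r ^ (m : ℕ)
  have hP : P.coeff (r ^ (m₀ : ℕ)) = c m₀ := by
    simp only [P, finsetSum_coeff, coeff_C_mul_X_pow]
    rw [Finset.sum_eq_single m₀ (fun m _ hm => if_neg fun h => hm
      (Fin.ext (Nat.pow_right_injective hr h).symm)) (by simp), if_pos rfl]
  have hP0 : P ≠ 0 := fun h0 => hm₀ (by rw [← hP, h0, coeff_zero]; rfl)
  have hdeg : P.natDegree ≤ r ^ n - 1 :=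
    natDegree_sum_le_of_forall_le _ _ fun m _ => (natDegree_C_mul_X_pow_le _ _).trans
      (Nat.le_sub_one_of_lt (Nat.pow_lt_pow_right hr m.isLt))
  have hroots : S ⊆ (P.roots.toFinset : Set R) := fun y hy => by
    simpa [mem_roots hP0, P, eval_finsetSum] using h y hy
  have : Nat.card S ≤ P.natDegree := calc
    Nat.card S ≤ P.roots.toFinset.card :=
      (Nat.card_mono (Finset.finite_toSet _) hroots).trans_eq (Nat.card_eq_finsetCard _)
    _ ≤ P.natDegree := (Multiset.toFinset_card_le _).trans (card_roots' P)
  have := Nat.one_le_pow n r (by omega)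
  omega

section EvalOnSpan

variable {ι M : Type*} (R S : Type*) [CommRing R] [Semiring S] [AddCommGroup M] [Module R M]
  [Module R S] [SMulCommClass R S S]

def evalOnSpan (z : ι → M) : (Submodule.span R (Set.range z) →ₗ[R] S) →ₗ[S] (ι → S) where
  toFun f i := f ⟨z i, Submodule.subset_span (Set.mem_range_self i)⟩
  map_add' _ _ := rfl
  map_smul' _ _ := rfl

theorem evalOnSpan_injective (z : ι → M) : Function.Injective (evalOnSpan R S z) := by
  intro f g hfg
  refine LinearMap.ext_on Submodule.span_span_coe_preimage ?_
  rintro ⟨_, hx⟩ ⟨i, rfl⟩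
  exact congrFun hfg i

end EvalOnSpan

theorem finrank_range_evalOnSpan {ι k K : Type*} [Finite ι] [Field k] [Field K] [Algebra k K]
    (z : ι → K) :
    finrank K (LinearMap.range (evalOnSpan k K z)) =
      finrank k (Submodule.span k (Set.range z)) := by
  have := FiniteDimensional.span_of_finite k (Set.finite_range z)
  rw [LinearMap.finrank_range_of_inj (evalOnSpan_injective k K z), finrank_linearMap_self]

section Frobenius

variable {k K : Type*} [Field k] [Fintype k] [Field K] [Algebra k K]

open FiniteField

theorem frobeniusAlgHom_pow_apply (m : ℕ) (x : K) :
    (frobeniusAlgHom k K ^ m) x = x ^ Fintype.card k ^ m := by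
  rw [AlgHom.coe_pow, coe_frobeniusAlgHom, pow_iterate]

theorem linearIndependent_frobeniusAlgHom_pow_comp_subtype (V : Submodule k K)
    [Module.Finite k V] (n : ℕ) :
    LinearIndependent K fun m : Fin (finrank k V) =>
      (frobeniusAlgHom k K ^ (n + m)).toLinearMap ∘ₗ V.subtype := by
  rw [Fintype.linearIndependent_iff]
  intro c hc
  refine congrFun (eq_zero_of_forall_sum_mul_pow_pow_eq_zero (Fintype.one_lt_card (α := k)) c
    (S := (frobeniusAlgHom k K ^ n) '' V) ?_ ?_)
  · rw [Nat.card_image_of_injective (f := ⇑(frobeniusAlgHom k K ^ n))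
      (frobeniusAlgHom k K ^ n).toRingHom.injective, SetLike.coe_sort_coe,
      Module.natCard_eq_pow_finrank (K := k), Nat.card_eq_fintype_card]
  · rintro _ ⟨y, hy, rfl⟩
    have hpow (m : ℕ) : (frobeniusAlgHom k K ^ (n + m)) y =
        ((frobeniusAlgHom k K ^ n) y) ^ Fintype.card k ^ m := by
      rw [frobeniusAlgHom_pow_apply, frobeniusAlgHom_pow_apply, pow_add, pow_mul]
    simpa [-AlgHom.coe_pow, hpow] using LinearMap.congr_fun hc ⟨y, hy⟩

theorem span_range_frobeniusAlgHom_pow_comp_subtype_eq_top (V : Submodule k K)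
    [Module.Finite k V] (n : ℕ) {u : ℕ} (hu : finrank k V ≤ u) :
    Submodule.span K (Set.range fun j : Fin u =>
      (frobeniusAlgHom k K ^ (n + j)).toLinearMap ∘ₗ V.subtype) = ⊤ := by
  rw [eq_top_iff, ← (linearIndependent_frobeniusAlgHom_pow_comp_subtype V n)
    |>.span_eq_top_of_card_eq_finrank' (by rw [Fintype.card_fin, finrank_linearMap_self])]
  refine Submodule.span_mono ?_
  rintro _ ⟨m, rfl⟩
  exact ⟨Fin.castLE hu m, rfl⟩

variable {ι : Type*}

theorem pow_card_pow_mem_range_evalOnSpan (z : ι → K) (m : ℕ) :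
    (fun i => z i ^ Fintype.card k ^ m) ∈ LinearMap.range (evalOnSpan k K z) :=
  ⟨(frobeniusAlgHom k K ^ m).toLinearMap ∘ₗ (Submodule.span k (Set.range z)).subtype,
    funext fun _ => frobeniusAlgHom_pow_apply _ _⟩

theorem span_range_pow_card_pow_add_eq_range_evalOnSpan [Finite ι] (z : ι → K) (n : ℕ) {u : ℕ}
    (hu : finrank k (Submodule.span k (Set.range z)) ≤ u) :
    Submodule.span K (Set.range fun j : Fin u => fun i => z i ^ Fintype.card k ^ (n + j)) =
      LinearMap.range (evalOnSpan k K z) := by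
  set V := Submodule.span k (Set.range z)
  have : Module.Finite k V := FiniteDimensional.span_of_finite k (Set.finite_range z)
  calc Submodule.span K (Set.range fun j : Fin u => fun i => z i ^ Fintype.card k ^ (n + j))
      = (Submodule.span K (Set.range fun j : Fin u =>
          (frobeniusAlgHom k K ^ (n + j)).toLinearMap ∘ₗ V.subtype)).map (evalOnSpan k K z) := by
        rw [Submodule.map_span, ← Set.range_comp]
        congr! with j i
        exact (frobeniusAlgHom_pow_apply _ _).symm
    _ = LinearMap.range (evalOnSpan k K z) := by
        rw [span_range_frobeniusAlgHom_pow_comp_subtype_eq_top V n hu, Submodule.map_top]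

end Frobenius

section Probability

variable {Ω S T U : Type*} [Fintype Ω] (pr : Ω → ℝ)

theorem sum_probOf [Fintype S] (X : Ω → S) : ∑ s, probOf pr X s = ∑ ω, pr ω :=
  Finset.sum_fiberwise _ _ _

theorem probOf_comp [Fintype S] (X : Ω → S) (f : S → T) (t : T) :
    probOf pr (fun ω => f (X ω)) t =
      ∑ s ∈ Finset.univ.filter (fun s => f s = t), probOf pr X s := by
  rw [probOf, ← Finset.sum_fiberwise_of_maps_to (g := X)
    (t := Finset.univ.filter (fun s => f s = t)) (fun ω hω => by simpa using hω)]
  refine Finset.sum_congr rfl fun s hs => ?_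
  rw [probOf, Finset.filter_filter]
  congr! 2 with ω
  simp only [Finset.mem_filter, Finset.mem_univ, true_and] at hs
  constructor
  · exact fun h => h.2
  · exact fun h => ⟨h ▸ hs, h⟩

theorem probOf_add_eq_sum_of_indepRV [AddCommGroup S] [Fintype T] [Fintype U]
    (M : Ω → T) (R : Ω → U) (hMR : IndepRV pr M R) (c : T → S) (L : U → S) (e : S) :
    probOf pr (fun ω => c (M ω) + L (R ω)) e =
      ∑ m, probOf pr M m * probOf pr (fun ω => L (R ω)) (e - c m) := by
  rw [probOf_comp pr (fun ω => (M ω, R ω)) (fun x => c x.1 + L x.2), Finset.sum_filter,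
    Fintype.sum_prod_type]
  refine Finset.sum_congr rfl fun m _ => ?_
  rw [probOf_comp pr R L, Finset.sum_filter, Finset.mul_sum]
  refine Finset.sum_congr rfl fun r _ => ?_
  rw [hMR, ← eq_sub_iff_add_eq']
  split_ifs <;> simp

theorem probOf_addMonoidHom_comp_eq_indicator [AddGroup U] [Fintype U] [AddMonoid S] (R : Ω → U)
    (hR : ∀ r, probOf pr R r = 1 / (Fintype.card U : ℝ)) (L : U →+ S) (s : S) :
    probOf pr (fun ω => L (R ω)) s =
      (Set.range L).indicator (fun _ => (Nat.card (Set.range L) : ℝ)⁻¹) s := by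
  rw [probOf_comp pr R L, Finset.sum_congr rfl fun r _ => hR r, Finset.sum_const, nsmul_eq_mul,
    Set.indicator_apply]
  split_ifs with hs
  · have hcard : Finset.card {r | L r = s} * Nat.card (Set.range L) = Fintype.card U := by
      rw [← Finset.card_univ, Finset.card_eq_sum_card_fiberwise (s := Finset.univ) (f := L)
          (t := (Set.range L).toFinset) (by simp),
        Finset.sum_const_nat fun y hy =>
          AddMonoidHom.card_fiber_eq_of_mem_range L (Set.mem_toFinset.mp hy) hs,
        Nat.card_eq_card_toFinset, mul_comm]
    have hpos : 0 < Finset.card {r | L r = s} * Nat.card (Set.range L) :=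
      hcard ▸ Fintype.card_pos
    rw [← hcard, Nat.cast_mul]
    field_simp [(Nat.pos_of_mul_pos_right hpos).ne', (Nat.pos_of_mul_pos_left hpos).ne']
  · rw [Finset.filter_false_of_mem fun r _ hr => hs ⟨r, hr⟩]
    simp

theorem probOf_add_addMonoidHom_comp_eq_indicator [AddCommGroup S] [Fintype T] [AddGroup U]
    [Fintype U]
    (hsum : ∑ ω, pr ω = 1) (M : Ω → T) (R : Ω → U) (hMR : IndepRV pr M R)
    (hR : ∀ r, probOf pr R r = 1 / (Fintype.card U : ℝ)) (c : T → S) (L : U →+ S)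
    (hc : ∀ m, c m ∈ Set.range L) (e : S) :
    probOf pr (fun ω => c (M ω) + L (R ω)) e =
      (Set.range L).indicator (fun _ => (Nat.card (Set.range L) : ℝ)⁻¹) e := by
  have hmem (m : T) : e - c m ∈ Set.range L ↔ e ∈ Set.range L := by
    rw [← AddMonoidHom.coe_range] at hc ⊢
    exact ⟨fun h => by simpa using add_mem h (hc m), fun h => sub_mem h (hc m)⟩
  simp_rw [probOf_add_eq_sum_of_indepRV pr M R hMR, probOf_addMonoidHom_comp_eq_indicator pr R hR,
    Set.indicator_apply, hmem, ← Finset.sum_mul, sum_probOf, hsum, one_mul]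

theorem shannonEntropy_eq_log_natCard_of_eq_indicator [Fintype S] (X : Ω → S) (A : Set S)
    (hX : ∀ s, probOf pr X s = A.indicator (fun _ => (Nat.card A : ℝ)⁻¹) s) :
    shannonEntropy pr X = Real.log (Nat.card A) := by
  have hterm (s : S) : probOf pr X s * Real.log (probOf pr X s) =
      A.indicator (fun _ => (Nat.card A : ℝ)⁻¹ * Real.log (Nat.card A : ℝ)⁻¹) s := by
    simp only [hX, Set.indicator_apply]
    split_ifs <;> simp
  simp only [shannonEntropy, hterm, Set.indicator_apply, Finset.sum_ite, Finset.sum_const_zero,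
    add_zero, Finset.sum_const, nsmul_eq_mul]
  rw [← Fintype.card_subtype, ← Nat.card_eq_fintype_card]
  generalize (Nat.card A : ℝ) = n
  rcases eq_or_ne n 0 with rfl | hn
  · simp
  · rw [Real.log_inv]
    field_simp

end Probability

theorem secure_RFC_eavesdropped_entropy_general
    (q p k u w ν : ℕ) [Fact q.Prime] (hp : 0 < p)
    [Fintype (GaloisField q p)]
    {Ω : Type*} [Fintype Ω]
    (pr : Ω → ℝ) (hsum : ∑ ω : Ω, pr ω = 1)
    (z : Fin w → GaloisField q p)
    (hν : Module.finrank (ZMod q) (Submodule.span (ZMod q) (Set.range z)) = ν)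
    (hνu : ν ≤ u)
    (M : Ω → Fin k → GaloisField q p)
    (R : Ω → Fin u → GaloisField q p)
    (hMR : IndepRV pr M R)
    (hR : ∀ v : Fin u → GaloisField q p,
        probOf pr R v = 1 / (Fintype.card (Fin u → GaloisField q p) : ℝ))
    (E : Ω → Fin w → GaloisField q p)
    (hE : ∀ ω (i : Fin w),
        E ω i = ∑ j : Fin k, M ω j * z i ^ q ^ (j : ℕ)
              + ∑ j : Fin u, R ω j * z i ^ q ^ (k + (j : ℕ))) :
    shannonEntropy pr E = (ν : ℝ) * (p : ℝ) * Real.log (q : ℝ) := by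
  let g (m : ℕ) : Fin w → GaloisField q p := fun i => z i ^ q ^ m
  let L := Fintype.linearCombination (GaloisField q p) fun j : Fin u => g (k + j)
  let c := Fintype.linearCombination (GaloisField q p) fun j : Fin k => g j
  have hW : LinearMap.range L = LinearMap.range (evalOnSpan (ZMod q) (GaloisField q p) z) := by
    rw [Fintype.range_linearCombination, ← span_range_pow_card_pow_add_eq_range_evalOnSpan z k
      (hν ▸ hνu), ZMod.card]
  have hc (m : Fin k → GaloisField q p) : c m ∈ Set.range L.toAddMonoidHom := by
    change c m ∈ Set.range L
    rw [← LinearMap.coe_range, hW, SetLike.mem_coe, Fintype.linearCombination_apply]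
    exact Submodule.sum_mem _ fun j _ => Submodule.smul_mem _ _
      (by simpa [ZMod.card] using pow_card_pow_mem_range_evalOnSpan (k := ZMod q) z j)
  have hE_eq : E = fun ω => c (M ω) + L.toAddMonoidHom (R ω) := by
    ext ω i
    simp [hE, c, L, g, Fintype.linearCombination_apply]
  rw [hE_eq, shannonEntropy_eq_log_natCard_of_eq_indicator pr _ _
    (probOf_add_addMonoidHom_comp_eq_indicator pr hsum M R hMR hR c L.toAddMonoidHom hc)]
  have hcard : Nat.card (Set.range L) = (q ^ p) ^ ν := by
    rw [← LinearMap.coe_range, SetLike.coe_sort_coe,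
      Module.natCard_eq_pow_finrank (K := GaloisField q p), hW, finrank_range_evalOnSpan, hν,
      GaloisField.card q p hp.ne']
  rw [LinearMap.toAddMonoidHom_coe, hcard]
  push_cast
  rw [Real.log_pow, Real.log_pow]
  ring

/-- with `F = GF(q^p)`, evaluation points `z_1, …, z_w` whose
`GF(q)`-linear span has dimension `ν ≤ u`, message `M` with values in `F^k`,
padding `R` uniform on `F^u` independent of `M`, and
`E_i = ∑_{j=1}^{k} M_j z_i^{q^{j-1}} + ∑_{j=1}^{u} R_j z_i^{q^{k+j-1}}`,
the entropy of the eavesdropped vector is `H(E) = ν · p · log q`. -/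
theorem secure_RFC_eavesdropped_entropy
    (q p k u w ν : ℕ) [Fact q.Prime] (hp : 0 < p)
    [Fintype (GaloisField q p)]
    {Ω : Type*} [Fintype Ω]
    (pr : Ω → ℝ) (hpr : ∀ ω, 0 ≤ pr ω) (hsum : ∑ ω : Ω, pr ω = 1)
    (z : Fin w → GaloisField q p)
    (hν : Module.finrank (ZMod q) (Submodule.span (ZMod q) (Set.range z)) = ν)
    (hνu : ν ≤ u)
    (M : Ω → Fin k → GaloisField q p)
    (R : Ω → Fin u → GaloisField q p)
    (hMR : IndepRV pr M R)
    (hR : ∀ v : Fin u → GaloisField q p,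
        probOf pr R v = 1 / (Fintype.card (Fin u → GaloisField q p) : ℝ))
    (E : Ω → Fin w → GaloisField q p)
    (hE : ∀ ω (i : Fin w),
        E ω i = ∑ j : Fin k, M ω j * z i ^ q ^ (j : ℕ)
              + ∑ j : Fin u, R ω j * z i ^ q ^ (k + (j : ℕ))) :
    shannonEntropy pr E = (ν : ℝ) * (p : ℝ) * Real.log (q : ℝ) :=
  secure_RFC_eavesdropped_entropy_general q p k u w ν hp pr hsum z hν hνu M R hMR hR E hE
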